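/- Let R be of type E_6 and set v_2 := s_2 s_4 s_5 s_3 s_6 s_4 s_1 s_3 s_5 s_4 s_2 ∈ W. Then: (1) w_{0, S∖{α_2, α_3}}(α_2) = α_2 + α_4 + α_5 + α_6, w_{0, S∖{α_2}} w_{0, S∖{α_2, α_3}}(α_2) = ω_2 − (α_1 + α_2 + α_3 + α_4), and v_2 w_{0, S∖{α_2}} w_{0, S∖{α_2, α_3}}(α_2) = α_1 + α_3 + α_4; (2) w_{0, S∖{α_2, α_4}}(α_2) = α_2, w_{0, S∖{α_2}} w_{0, S∖{α_2, α_4}}(α_2) = ω_2 − α_2, and v_2 w_{0, S∖{α_2}} w_{0, S∖{α_2, α_4}}(α_2) = ω_2 − α_2; (3) w_{0, S∖{α_2, α_5}}(α_2) = α_1 + α_2 + α_3 + α_4, w_{0, S∖{α_2}} w_{0, S∖{α_2, α_5}}(α_2) = ω_2 − (α_2 + α_4 + α_5 + α_6), and v_2 w_{0, S∖{α_2}} w_{0, S∖{α_2, α_5}}(α_2) = α_4 + α_5 + α_6; (4) w_{0, S∖{α_2, α_i}}(α_i) = α_1 + α_3 + α_4 + α_5 + α_6 for each i ∈ {3, 4,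 5}. -/

import Mathlib

noncomputable section

open scoped Classical

local notation "⟪" x ", " y "⟫" => @inner ℝ _ _ x y

namespace PaperFormal

variable (V : Type*) [NormedAddCommGroup V] [InnerProductSpace ℝ V] [FiniteDimensional ℝ V]

/-- The reflection of the Euclidean space `V` in the hyperplane orthogonal to `v`,
i.e. `β ↦ β - (2⟪β,v⟫/⟪v,v⟫) v`. -/
def sref (v : V) : V ≃ₗᵢ[ℝ] V := Submodule.reflection (ℝ ∙ v)ᗮ

/-- A reduced irreducible crystallographic root system `R` in the Euclidean space `V`,
together with a fixed base of simple roots `a 1, …, a n`. -/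
structure RootSystemWithBase (n : ℕ) : Type _ where
  /-- the set of roots -/
  R : Set V
  /-- the simple roots `a 1, …, a n` (values outside `{1, …, n}` are irrelevant) -/
  a : ℕ → V
  finite : R.Finite
  ne_zero : ∀ β ∈ R, β ≠ 0
  refl_mem : ∀ α ∈ R, ∀ β ∈ R, sref V α β ∈ R
  crystallographic : ∀ α ∈ R, ∀ β ∈ R, ∃ k : ℤ, 2 * ⟪β, α⟫ / ⟪α, α⟫ = (k : ℝ)
  reduced : ∀ α ∈ R, ∀ t : ℝ, t • α ∈ R → t = 1 ∨ t = -1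
  irreducible : ∀ P : Set V, (∀ x ∈ R, ∀ y ∈ R, x ∈ P → ⟪x, y⟫ ≠ 0 → y ∈ P) →
      (R ∩ P).Nonempty → R ⊆ P
  simple_mem : ∀ i ∈ Finset.Icc 1 n, a i ∈ R
  indep : LinearIndependent ℝ (fun i : (Set.Icc 1 n : Set ℕ) => a i)
  span_top : Submodule.span ℝ (a '' Set.Icc 1 n) = ⊤
  root_combo : ∀ β ∈ R, ∃ c : ℕ → ℤ, ((∀ i, 0 ≤ c i) ∨ (∀ i, c i ≤ 0)) ∧
      β = ∑ i ∈ Finset.Icc 1 n, (c i : ℝ) • a i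

namespace RootSystemWithBase

variable {V} {n : ℕ} (S : RootSystemWithBase V n)

/-- The simple reflection `s i` associated to the simple root `a i`. -/
def s (i : ℕ) : V ≃ₗᵢ[ℝ] V := sref V (S.a i)

/-- The product of the simple reflections along a list of indices
(leftmost factor acting last). -/
def prodW (l : List ℕ) : V ≃ₗᵢ[ℝ] V := (l.map S.s).prod

/-- The parabolic subgroup `W_J` of the Weyl group generated by the simple reflections
`s i` for `i ∈ J`. -/
def WJ (J : Set ℕ) : Subgroup (V ≃ₗᵢ[ℝ] V) :=
  Subgroup.closure (S.s '' (J ∩ Set.Icc 1 n))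

/-- The Weyl group `W`, generated by all simple reflections. -/
def W : Subgroup (V ≃ₗᵢ[ℝ] V) := S.WJ Set.univ

/-- The length of `w` with respect to the simple reflections indexed by `J`:
the least length of a word in these reflections expressing `w`. -/
def lenJ (J : Set ℕ) (w : V ≃ₗᵢ[ℝ] V) : ℕ :=
  sInf {k | ∃ l : List ℕ, (∀ i ∈ l, i ∈ J ∩ Set.Icc 1 n) ∧ l.length = k ∧ w = S.prodW l}

/-- The length function `ℓ` of the Weyl group. -/
def len (w : V ≃ₗᵢ[ℝ] V) : ℕ := S.lenJ Set.univ w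

/-- `w` is the longest element `w_{0,J}` of the parabolic subgroup `W_J`. -/
def IsLongest (J : Set ℕ) (w : V ≃ₗᵢ[ℝ] V) : Prop :=
  w ∈ S.WJ J ∧ ∀ x ∈ S.WJ J, S.lenJ J x ≤ S.lenJ J w

/-- `β` is a positive root (with respect to the base `a`). -/
def IsPos (β : V) : Prop :=
  β ∈ S.R ∧ ∃ c : ℕ → ℝ, (∀ i, 0 ≤ c i) ∧ β = ∑ i ∈ Finset.Icc 1 n, c i • S.a i

/-- `β` is a negative root. -/
def IsNeg (β : V) : Prop := S.IsPos (-β)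

/-- `h` is the highest root `α_0`: a root such that `h - β` is a nonnegative combination of
the simple roots for every root `β`. -/
def IsHighest (h : V) : Prop :=
  h ∈ S.R ∧ ∀ β ∈ S.R, ∃ c : ℕ → ℝ, (∀ i, 0 ≤ c i) ∧
    h - β = ∑ i ∈ Finset.Icc 1 n, c i • S.a i

/-- The root system is simply laced: all roots have the same length. -/
def SimplyLaced : Prop := ∀ α ∈ S.R, ∀ β ∈ S.R, ⟪α, α⟫ = ⟪β, β⟫

/-- `ω` is the fundamental weight `ω_r` dual to the simple root `a r`:
`⟨ω, a j⟩ = δ_{rj}` for `1 ≤ j ≤ n`. -/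
def IsFundamental (r : ℕ) (ω : V) : Prop :=
  ∀ j ∈ Finset.Icc 1 n, 2 * ⟪ω, S.a j⟫ / ⟪S.a j, S.a j⟫ = if j = r then 1 else 0

/-- A weight `ω` is minuscule: `⟨ω, β⟩ ≤ 1` for every positive root `β`. -/
def Minuscule (ω : V) : Prop := ∀ β, S.IsPos β → 2 * ⟪ω, β⟫ / ⟪β, β⟫ ≤ 1

end RootSystemWithBase

variable {V}


/-! ### Auxiliary development -/

section Aux

set_option linter.unusedSectionVars false

lemma sref_apply (v x : V) : sref V v x = x - (2 * ⟪v, x⟫ / ⟪v, v⟫) • v := by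
  rw [sref, Submodule.reflection_apply, Submodule.starProjection_orthogonal_val,
    Submodule.starProjection_singleton, real_inner_self_eq_norm_sq]
  rw [two_smul]
  simp only [RCLike.ofReal_real_eq_id, id_eq]
  rw [div_eq_mul_inv, div_eq_mul_inv, mul_comm (2:ℝ)]
  module

lemma sref_self (v : V) : sref V v v = -v := by
  rcases eq_or_ne v 0 with rfl | hv
  · simp [sref_apply]
  · rw [sref_apply, mul_div_assoc, div_self (inner_self_ne_zero.2 hv)]
    module

lemma sref_conj (w : V ≃ₗᵢ[ℝ] V) (v x : V) :
    sref V (w v) x = w (sref V v (w.symm x)) := by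
  rw [sref_apply, sref_apply, map_sub, w.apply_symm_apply, map_smul]
  rw [← w.inner_map_map v (w.symm x), ← w.inner_map_map v v, w.apply_symm_apply]

namespace RootSystemWithBase

variable {n : ℕ} (S : RootSystemWithBase V n)

lemma s_mul_self (i : ℕ) : S.s i * S.s i = 1 := by
  ext x
  have : (S.s i) ((S.s i) x) = x := by
    show (Submodule.reflection _) ((Submodule.reflection _) x) = x
    exact Submodule.reflection_reflection _ x
  simpa using this

lemma s_inv (i : ℕ) : (S.s i)⁻¹ = S.s i :=
  inv_eq_of_mul_eq_one_right (S.s_mul_self i)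

lemma prodW_nil : S.prodW [] = 1 := rfl

lemma prodW_cons (i : ℕ) (l : List ℕ) : S.prodW (i :: l) = S.s i * S.prodW l := by
  simp [prodW]

lemma prodW_cons_apply (i : ℕ) (l : List ℕ) (x : V) :
    S.prodW (i :: l) x = S.s i (S.prodW l x) := by
  rw [prodW_cons]; rfl

lemma prodW_nil_apply (x : V) : S.prodW [] x = x := rfl

lemma prodW_append (l₁ l₂ : List ℕ) :
    S.prodW (l₁ ++ l₂) = S.prodW l₁ * S.prodW l₂ := by
  simp [prodW]

lemma prodW_singleton (i : ℕ) : S.prodW [i] = S.s i := by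
  simp [prodW]

lemma prodW_inv (l : List ℕ) : (S.prodW l)⁻¹ = S.prodW l.reverse := by
  induction l with
  | nil => simp [prodW_nil]
  | cons i l ih =>
      rw [prodW_cons, mul_inv_rev, ih, S.s_inv, List.reverse_cons, prodW_append,
        prodW_singleton]

lemma prodW_mem {J : Set ℕ} {l : List ℕ} (hl : ∀ i ∈ l, i ∈ J ∩ Set.Icc 1 n) :
    S.prodW l ∈ S.WJ J := by
  induction l with
  | nil => exact one_mem _
  | cons i l ih =>
      rw [prodW_cons]
      exact mul_mem (Subgroup.subset_closure ⟨i, hl i (by simp), rfl⟩)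
        (ih fun j hj => hl j (by simp [hj]))

lemma exists_word {J : Set ℕ} {w : V ≃ₗᵢ[ℝ] V} (hw : w ∈ S.WJ J) :
    ∃ l : List ℕ, (∀ i ∈ l, i ∈ J ∩ Set.Icc 1 n) ∧ w = S.prodW l := by
  induction hw using Subgroup.closure_induction with
  | mem x hx =>
      obtain ⟨i, hi, rfl⟩ := hx
      exact ⟨[i], by simpa using hi, (S.prodW_singleton i).symm⟩
  | one => exact ⟨[], by simp, rfl⟩
  | mul x y hx' hy' hx hy =>
      obtain ⟨l₁, h₁, rfl⟩ := hx
      obtain ⟨l₂, h₂, rfl⟩ := hy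
      refine ⟨l₁ ++ l₂, ?_, (S.prodW_append l₁ l₂).symm⟩
      intro i hi
      rcases List.mem_append.1 hi with h | h
      exacts [h₁ i h, h₂ i h]
  | inv x hx' hx =>
      obtain ⟨l, h, rfl⟩ := hx
      exact ⟨l.reverse, fun i hi => h i (List.mem_reverse.1 hi), S.prodW_inv l⟩

end RootSystemWithBase

end Aux

section Aux2

set_option linter.unusedSectionVars false

namespace RootSystemWithBase

variable {V : Type*} [NormedAddCommGroup V] [InnerProductSpace ℝ V] [FiniteDimensional ℝ V]
variable {n : ℕ} (S : RootSystemWithBase V n)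

lemma coeff_zero {c : ℕ → ℝ} (h : ∑ i ∈ Finset.Icc 1 n, c i • S.a i = 0) :
    ∀ i ∈ Finset.Icc 1 n, c i = 0 := by
  have hind := linearIndependent_iff'.1 S.indep
  intro i hi
  have hmem : i ∈ Set.Icc 1 n := by
    simpa [Set.mem_Icc] using Finset.mem_Icc.1 hi
  have key : ∑ j : (Set.Icc 1 n : Set ℕ), c j • S.a (j : ℕ) = 0 := by
    rw [← Finset.sum_subtype (Finset.Icc 1 n)
      (fun x => by simp [Set.mem_Icc, Finset.mem_Icc]) (fun j => c j • S.a j)]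
    exact h
  exact hind Finset.univ (fun j => c j) key ⟨i, hmem⟩ (Finset.mem_univ _)

lemma sum_single {k : ℕ} (hk : k ∈ Finset.Icc 1 n) (t : ℝ) :
    ∑ m ∈ Finset.Icc 1 n, (if m = k then t else 0) • S.a m = t • S.a k := by
  simp only [ite_smul, zero_smul]
  rw [Finset.sum_ite_eq' (Finset.Icc 1 n) k (fun m => t • S.a m), if_pos hk]

lemma neg_mem {β : V} (hβ : β ∈ S.R) : -β ∈ S.R := by
  have := S.refl_mem β hβ β hβ
  rwa [sref_self] at this

lemma isPos_simple {k : ℕ} (hk : k ∈ Finset.Icc 1 n) : S.IsPos (S.a k) :=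
  ⟨S.simple_mem k hk, fun m => if m = k then 1 else 0,
    fun m => by by_cases h : m = k <;> simp [h], by rw [S.sum_single hk, one_smul]⟩

lemma pos_or_neg {β : V} (hβ : β ∈ S.R) : S.IsPos β ∨ S.IsNeg β := by
  obtain ⟨c, hc | hc, hrep⟩ := S.root_combo β hβ
  · exact Or.inl ⟨hβ, fun i => (c i : ℝ), fun i => by show (0:ℝ) ≤ (c i : ℝ); exact_mod_cast hc i, hrep⟩
  · refine Or.inr ⟨S.neg_mem hβ, fun i => -(c i : ℝ),
      fun i => by show (0:ℝ) ≤ -(c i : ℝ); simp; exact_mod_cast hc i, ?_⟩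
    rw [hrep, ← Finset.sum_neg_distrib]
    exact Finset.sum_congr rfl fun i _ => by rw [neg_smul]

lemma pos_neg_false {β : V} (h1 : S.IsPos β) (h2 : S.IsNeg β) : False := by
  obtain ⟨hR, c, hc, hrep⟩ := h1
  obtain ⟨hR', d, hd, hrep'⟩ := h2
  have hz : ∑ i ∈ Finset.Icc 1 n, (c i + d i) • S.a i = 0 := by
    simp only [add_smul, Finset.sum_add_distrib, ← hrep, ← hrep']
    simp
  have hco := S.coeff_zero hz
  have hβ0 : β = 0 := by
    rw [hrep]
    refine Finset.sum_eq_zero fun i hi => ?_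
    have h1 := hco i hi
    have h2 := hc i
    have h3 := hd i
    have : c i = 0 := by linarith
    rw [this, zero_smul]
  exact S.ne_zero β hR hβ0

lemma word_maps_R {l : List ℕ} (hl : ∀ i ∈ l, i ∈ Set.Icc 1 n) {β : V} (hβ : β ∈ S.R) :
    S.prodW l β ∈ S.R := by
  induction l with
  | nil => exact hβ
  | cons i l ih =>
      rw [prodW_cons_apply]
      have hi : i ∈ Finset.Icc 1 n := by
        have := hl i (by simp)
        simpa [Finset.mem_Icc, Set.mem_Icc] using this
      exact S.refl_mem (S.a i) (S.simple_mem i hi) _ (ih fun j hj => hl j (by simp [hj]))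

lemma word_sub_combo {J : Set ℕ} {l : List ℕ} (hl : ∀ i ∈ l, i ∈ J ∩ Set.Icc 1 n) (x : V) :
    ∃ d : ℕ → ℝ, (∀ i, i ∉ J ∩ Set.Icc 1 n → d i = 0) ∧
      S.prodW l x - x = ∑ i ∈ Finset.Icc 1 n, d i • S.a i := by
  induction l with
  | nil =>
      refine ⟨fun _ => 0, fun _ _ => rfl, by simp [prodW_nil_apply]⟩
  | cons i l ih =>
      obtain ⟨d, hd0, hd⟩ := ih (fun j hj => hl j (by simp [hj]))
      have hiJ : i ∈ J ∩ Set.Icc 1 n := hl i (by simp)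
      have hiF : i ∈ Finset.Icc 1 n := by
        simpa [Finset.mem_Icc, Set.mem_Icc] using hiJ.2
      set y := S.prodW l x with hy
      set t : ℝ := 2 * ⟪S.a i, y⟫ / ⟪S.a i, S.a i⟫ with ht
      refine ⟨fun m => d m - (if m = i then t else 0), fun m hm => ?_, ?_⟩
      · show d m - (if m = i then t else 0) = 0
        rw [hd0 m hm, if_neg, sub_zero]
        rintro rfl; exact hm hiJ
      · rw [prodW_cons_apply]
        have hsi : S.s i y = y - t • S.a i := sref_apply (S.a i) y
        rw [hsi]
        simp only [sub_smul, Finset.sum_sub_distrib, ← hd]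
        rw [S.sum_single hiF t]
        abel

lemma s_pos {i : ℕ} (hi : i ∈ Finset.Icc 1 n) {β : V} (hβ : S.IsPos β)
    (hne : β ≠ S.a i) : S.IsPos (S.s i β) := by
  obtain ⟨hR, c, hc, hrep⟩ := hβ
  have haiR := S.simple_mem i hi
  have hsR : S.s i β ∈ S.R := S.refl_mem (S.a i) haiR β hR
  rcases S.pos_or_neg hsR with hpos | hneg
  · exact hpos
  · exfalso
    obtain ⟨hR', e, he, hrep'⟩ := hneg
    set t : ℝ := 2 * ⟪S.a i, β⟫ / ⟪S.a i, S.a i⟫ with ht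
    have hs : S.s i β = β - t • S.a i := sref_apply (S.a i) β
    have hz : ∑ m ∈ Finset.Icc 1 n, (c m + e m - (if m = i then t else 0)) • S.a m = 0 := by
      simp only [add_smul, sub_smul, Finset.sum_add_distrib, Finset.sum_sub_distrib,
        ← hrep, ← hrep']
      rw [S.sum_single hi t, hs]
      abel
    have hco := S.coeff_zero hz
    have hcm : ∀ m ∈ Finset.Icc 1 n, m ≠ i → c m = 0 := by
      intro m hm hmi
      have h1 := hco m hm
      rw [if_neg hmi] at h1
      have h2 := he m
      have h3 := hc m
      linarith
    have hβi : β = c i • S.a i := by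
      rw [hrep]
      rw [Finset.sum_eq_single i (fun m hm hmi => by rw [hcm m hm hmi, zero_smul])
        (fun h => absurd hi h)]
    have hmem : c i • S.a i ∈ S.R := hβi ▸ hR
    rcases S.reduced (S.a i) haiR (c i) hmem with h1 | h1
    · exact hne (by rw [hβi, h1, one_smul])
    · have := hc i
      rw [h1] at this
      linarith

end RootSystemWithBase

end Aux2

section Aux3

set_option linter.unusedSectionVars false

namespace RootSystemWithBase

variable {V : Type*} [NormedAddCommGroup V] [InnerProductSpace ℝ V] [FiniteDimensional ℝ V]
variable {n : ℕ} (S : RootSystemWithBase V n)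

lemma eq_simple_of_neg {i : ℕ} (hi : i ∈ Finset.Icc 1 n) {β : V} (hβ : S.IsPos β)
    (hneg : S.IsNeg (S.s i β)) : β = S.a i := by
  by_contra hne
  exact S.pos_neg_false (S.s_pos hi hβ hne) hneg

lemma mem_FIcc_of_mem {J : Set ℕ} {j : ℕ} (hj : j ∈ J ∩ Set.Icc 1 n) :
    j ∈ Finset.Icc 1 n := by
  simpa [Finset.mem_Icc, Set.mem_Icc] using hj.2

lemma s_sq_apply (j : ℕ) (x : V) : S.s j (S.s j x) = x := by
  have h3 := DFunLike.congr_fun (S.s_mul_self j) x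
  simpa using h3

lemma exchange {J : Set ℕ} {l : List ℕ} (hl : ∀ i ∈ l, i ∈ J ∩ Set.Icc 1 n)
    {j : ℕ} (hj : j ∈ J ∩ Set.Icc 1 n) (hneg : S.IsNeg (S.prodW l (S.a j))) :
    ∃ l' : List ℕ, (∀ i ∈ l', i ∈ J ∩ Set.Icc 1 n) ∧ l'.length + 1 = l.length ∧
      S.prodW l * S.s j = S.prodW l' := by
  induction l with
  | nil =>
      exfalso
      rw [prodW_nil_apply] at hneg
      exact S.pos_neg_false (S.isPos_simple (mem_FIcc_of_mem hj)) hneg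
  | cons i l ih =>
      have hiJ : i ∈ J ∩ Set.Icc 1 n := hl i (by simp)
      have hiF : i ∈ Finset.Icc 1 n := mem_FIcc_of_mem hiJ
      have hjF : j ∈ Finset.Icc 1 n := mem_FIcc_of_mem hj
      have hl' : ∀ m ∈ l, m ∈ J ∩ Set.Icc 1 n := fun m hm => hl m (by simp [hm])
      have hwR : S.prodW l (S.a j) ∈ S.R :=
        S.word_maps_R (fun m hm => (hl' m hm).2) (S.simple_mem j hjF)
      rcases S.pos_or_neg hwR with hpos | hneg' 
      · rw [prodW_cons_apply] at hneg
        have heq : S.prodW l (S.a j) = S.a i := S.eq_simple_of_neg hiF hpos hneg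
        refine ⟨l, hl', by simp, ?_⟩
        ext x
        have h1 : (S.prodW (i :: l) * S.s j) x = S.s i (S.prodW l (S.s j x)) := by
          rw [prodW_cons]; rfl
        rw [h1]
        have h2 : S.s i (S.prodW l (S.s j x)) =
            S.prodW l (S.s j ((S.prodW l).symm (S.prodW l (S.s j x)))) := by
          show sref V (S.a i) (S.prodW l (S.s j x)) = _
          rw [← heq]
          exact sref_conj (S.prodW l) (S.a j) (S.prodW l (S.s j x))
        rw [h2, (S.prodW l).symm_apply_apply, S.s_sq_apply]
      · obtain ⟨l'', h'', hlen, heq⟩ := ih hl' hneg'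
        refine ⟨i :: l'', fun m hm => ?_, by simp [← hlen], ?_⟩
        · rcases List.mem_cons.1 hm with rfl | hm
          exacts [hiJ, h'' m hm]
        · rw [prodW_cons, prodW_cons, mul_assoc, heq]

lemma lenJ_le {J : Set ℕ} {w : V ≃ₗᵢ[ℝ] V} {l : List ℕ}
    (hl : ∀ i ∈ l, i ∈ J ∩ Set.Icc 1 n) (hw : w = S.prodW l) :
    S.lenJ J w ≤ l.length :=
  Nat.sInf_le ⟨l, hl, rfl, hw⟩

lemma exists_min_word {J : Set ℕ} {w : V ≃ₗᵢ[ℝ] V} (hw : w ∈ S.WJ J) :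
    ∃ l : List ℕ, (∀ i ∈ l, i ∈ J ∩ Set.Icc 1 n) ∧ l.length = S.lenJ J w ∧
      w = S.prodW l := by
  obtain ⟨l₀, h₀, hw₀⟩ := S.exists_word hw
  have hne : {k | ∃ l : List ℕ, (∀ i ∈ l, i ∈ J ∩ Set.Icc 1 n) ∧ l.length = k ∧
      w = S.prodW l}.Nonempty := ⟨l₀.length, l₀, h₀, rfl, hw₀⟩
  obtain ⟨l, hl, hlen, hwl⟩ := Nat.sInf_mem hne
  exact ⟨l, hl, hlen, hwl⟩

lemma len_lt_of_neg {J : Set ℕ} {w : V ≃ₗᵢ[ℝ] V} (hw : w ∈ S.WJ J) {j : ℕ}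
    (hj : j ∈ J ∩ Set.Icc 1 n) (hneg : S.IsNeg (w (S.a j))) :
    S.lenJ J (w * S.s j) < S.lenJ J w := by
  obtain ⟨l, hl, hlen, rfl⟩ := S.exists_min_word hw
  obtain ⟨l', hl', hlen', heq⟩ := S.exchange hl hj hneg
  have := S.lenJ_le hl' heq
  omega

lemma len_lt_of_pos {J : Set ℕ} {w : V ≃ₗᵢ[ℝ] V} (hw : w ∈ S.WJ J) {j : ℕ}
    (hj : j ∈ J ∩ Set.Icc 1 n) (hpos : S.IsPos (w (S.a j))) :
    S.lenJ J w < S.lenJ J (w * S.s j) := by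
  have hsj : S.s j ∈ S.WJ J := Subgroup.subset_closure ⟨j, hj, rfl⟩
  have hneg : S.IsNeg ((w * S.s j) (S.a j)) := by
    have h1 : (w * S.s j) (S.a j) = w (S.s j (S.a j)) := rfl
    have h2 : S.s j (S.a j) = -(S.a j) := sref_self (S.a j)
    rw [h1, h2, map_neg]
    show S.IsPos (- - (w (S.a j)))
    rwa [neg_neg]
  have := S.len_lt_of_neg (mul_mem hw hsj) hj hneg
  rwa [mul_assoc, S.s_mul_self j, mul_one] at this

lemma eq_one_of_pos {J : Set ℕ} {u : V ≃ₗᵢ[ℝ] V} (hu : u ∈ S.WJ J)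
    (hpos : ∀ j ∈ J ∩ Set.Icc 1 n, S.IsPos (u (S.a j))) : u = 1 := by
  obtain ⟨l, hl, hlen, rfl⟩ := S.exists_min_word hu
  rcases List.eq_nil_or_concat l with rfl | ⟨l₁, j, rfl⟩
  · rfl
  · exfalso
    have hj : j ∈ J ∩ Set.Icc 1 n := hl j (by simp)
    have h1 : S.prodW (l₁.concat j) * S.s j = S.prodW l₁ := by
      rw [List.concat_eq_append, prodW_append, prodW_singleton, mul_assoc,
        s_mul_self, mul_one]
    have h2 := S.lenJ_le (fun m hm => hl m (by simp [hm])) h1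
    have h3 := S.len_lt_of_pos hu hj (hpos j hj)
    have h4 : (l₁.concat j).length = l₁.length + 1 := by simp
    omega

end RootSystemWithBase

end Aux3

section Aux4

set_option linter.unusedSectionVars false

namespace RootSystemWithBase

variable {V : Type*} [NormedAddCommGroup V] [InnerProductSpace ℝ V] [FiniteDimensional ℝ V]
variable {n : ℕ} (S : RootSystemWithBase V n)

/-- `β` is a positive root supported on the simple roots indexed by `J`. -/
def PosJ (J : Set ℕ) (β : V) : Prop :=
  β ∈ S.R ∧ ∃ c : ℕ → ℝ, (∀ i, 0 ≤ c i) ∧ (∀ i, i ∉ J ∩ Set.Icc 1 n → c i = 0) ∧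
    β = ∑ i ∈ Finset.Icc 1 n, c i • S.a i

lemma PosJ.isPos {J : Set ℕ} {β : V} (h : S.PosJ J β) : S.IsPos β :=
  ⟨h.1, h.2.choose, h.2.choose_spec.1, h.2.choose_spec.2.2⟩

lemma posJ_simple {J : Set ℕ} {j : ℕ} (hj : j ∈ J ∩ Set.Icc 1 n) :
    S.PosJ J (S.a j) := by
  have hjF : j ∈ Finset.Icc 1 n := mem_FIcc_of_mem hj
  refine ⟨S.simple_mem j hjF, fun m => if m = j then 1 else 0,
    fun m => by by_cases h : m = j <;> simp [h], fun m hm => ?_,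
    by rw [S.sum_single hjF, one_smul]⟩
  dsimp only
  rw [if_neg]
  rintro rfl
  exact hm hj

/-- If a root has a nonnegative representation and a `J`-supported representation,
then it is a `J`-supported positive root. -/
lemma posJ_of_two_reps {J : Set ℕ} {β : V} (hR : β ∈ S.R) {c d : ℕ → ℝ}
    (hc : ∀ i, 0 ≤ c i) (hrep : β = ∑ i ∈ Finset.Icc 1 n, c i • S.a i)
    (hd : ∀ i, i ∉ J ∩ Set.Icc 1 n → d i = 0)
    (hrep' : β = ∑ i ∈ Finset.Icc 1 n, d i • S.a i) : S.PosJ J β := by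
  have hz : ∑ i ∈ Finset.Icc 1 n, (c i - d i) • S.a i = 0 := by
    simp only [sub_smul, Finset.sum_sub_distrib, ← hrep, ← hrep']
    simp
  have hco := S.coeff_zero hz
  refine ⟨hR, fun m => if m ∈ Finset.Icc 1 n then c m else 0,
    fun m => by by_cases h : m ∈ Finset.Icc 1 n <;> simp [h, hc m], fun m hm => ?_, ?_⟩
  · dsimp only
    by_cases h : m ∈ Finset.Icc 1 n
    · rw [if_pos h]
      have h1 := hco m h
      have h2 := hd m hm
      linarith
    · rw [if_neg h]
  · rw [hrep]
    exact Finset.sum_congr rfl fun m hm => by dsimp only; rw [if_pos hm]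

/-- A `J`-word sends each simple root `a j`, `j ∈ J`, to the negative of a
`J`-supported positive root. -/
lemma posJ_neg_simple {J : Set ℕ} {l : List ℕ} (hl : ∀ i ∈ l, i ∈ J ∩ Set.Icc 1 n)
    {j : ℕ} (hj : j ∈ J ∩ Set.Icc 1 n) (hneg : S.IsNeg (S.prodW l (S.a j))) :
    S.PosJ J (-(S.prodW l (S.a j))) := by
  obtain ⟨hR, e, he, hrep⟩ := hneg
  obtain ⟨d, hd0, hd⟩ := S.word_sub_combo hl (S.a j)
  have hjF : j ∈ Finset.Icc 1 n := mem_FIcc_of_mem hj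
  refine S.posJ_of_two_reps hR he hrep
    (d := fun m => -(if m = j then 1 else 0) - d m) (fun m hm => ?_) ?_
  · rw [hd0 m hm, if_neg, sub_zero, neg_zero]
    rintro rfl
    exact hm hj
  · have h0 : -(S.prodW l (S.a j)) = -(S.a j) - (S.prodW l (S.a j) - S.a j) := by abel
    rw [h0, hd]
    have h1 : ∀ m ∈ Finset.Icc 1 n,
        ((fun m => (-(if m = j then (1:ℝ) else 0)) - d m) m) • S.a m
          = -((if m = j then (1:ℝ) else 0) • S.a m) - d m • S.a m := by
      intro m _
      dsimp only
      rw [sub_smul, neg_smul]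
    rw [Finset.sum_congr rfl h1, Finset.sum_sub_distrib, Finset.sum_neg_distrib,
      S.sum_single hjF 1, one_smul]

/-- If `w ∈ W_J` sends every simple root of `J` to a negative root, it maps
`J`-supported positive roots to negatives of `J`-supported positive roots. -/
lemma negJ_image {J : Set ℕ} {w : V ≃ₗᵢ[ℝ] V} (hw : w ∈ S.WJ J)
    (hneg : ∀ j ∈ J ∩ Set.Icc 1 n, S.IsNeg (w (S.a j))) :
    ∀ β, S.PosJ J β → S.PosJ J (-(w β)) := by
  obtain ⟨l, hl, rfl⟩ := S.exists_word hw
  have hspec : ∀ j, j ∈ J ∩ Set.Icc 1 n → S.PosJ J (-(S.prodW l (S.a j))) :=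
    fun j hj => S.posJ_neg_simple hl hj (hneg j hj)
  classical
  set g : ℕ → ℕ → ℝ := fun m =>
    if hm : m ∈ J ∩ Set.Icc 1 n then (hspec m hm).2.choose else fun _ => 0 with hg
  have hg_nonneg : ∀ m k, 0 ≤ g m k := by
    intro m k
    show 0 ≤ (if hm : m ∈ J ∩ Set.Icc 1 n then (hspec m hm).2.choose else fun _ => 0) k
    by_cases hm : m ∈ J ∩ Set.Icc 1 n
    · rw [dif_pos hm]
      exact (hspec m hm).2.choose_spec.1 k
    · rw [dif_neg hm]
  have hg_supp : ∀ m k, k ∉ J ∩ Set.Icc 1 n → g m k = 0 := by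
    intro m k hk
    show (if hm : m ∈ J ∩ Set.Icc 1 n then (hspec m hm).2.choose else fun _ => 0) k = 0
    by_cases hm : m ∈ J ∩ Set.Icc 1 n
    · rw [dif_pos hm]
      exact (hspec m hm).2.choose_spec.2.1 k hk
    · rw [dif_neg hm]
  have hg_rep : ∀ m, m ∈ J ∩ Set.Icc 1 n →
      -(S.prodW l (S.a m)) = ∑ k ∈ Finset.Icc 1 n, g m k • S.a k := by
    intro m hm
    have : g m = (hspec m hm).2.choose := by
      show (if hm : m ∈ J ∩ Set.Icc 1 n then (hspec m hm).2.choose else fun _ => 0)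
        = (hspec m hm).2.choose
      rw [dif_pos hm]
    rw [this]
    exact (hspec m hm).2.choose_spec.2.2
  rintro β ⟨hβR, c, hc, hcsupp, hrep⟩
  have hwβR : S.prodW l β ∈ S.R := S.word_maps_R (fun m hm => (hl m hm).2) hβR
  refine ⟨S.neg_mem hwβR, fun k => ∑ m ∈ Finset.Icc 1 n, c m * g m k,
    fun k => Finset.sum_nonneg fun m _ => mul_nonneg (hc m) (hg_nonneg m k),
    fun k hk => Finset.sum_eq_zero fun m _ => by rw [hg_supp m k hk, mul_zero], ?_⟩
  have hwβ : -(S.prodW l β) = ∑ m ∈ Finset.Icc 1 n, c m • (-(S.prodW l (S.a m))) := by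
    rw [hrep, map_sum]
    rw [← Finset.sum_neg_distrib]
    refine Finset.sum_congr rfl fun m hm => ?_
    rw [map_smul, smul_neg]
  rw [hwβ]
  have : ∀ m ∈ Finset.Icc 1 n,
      c m • (-(S.prodW l (S.a m))) = ∑ k ∈ Finset.Icc 1 n, (c m * g m k) • S.a k := by
    intro m hm
    by_cases hmJ : m ∈ J ∩ Set.Icc 1 n
    · rw [hg_rep m hmJ, Finset.smul_sum]
      exact Finset.sum_congr rfl fun k _ => by rw [smul_smul]
    · rw [hcsupp m hmJ]
      rw [zero_smul]
      symm
      refine Finset.sum_eq_zero fun k _ => ?_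
      rw [zero_mul, zero_smul]
  rw [Finset.sum_congr rfl this, Finset.sum_comm]
  refine Finset.sum_congr rfl fun k _ => ?_
  rw [Finset.sum_smul]

/-- The inverse of such a `w` also maps `J`-supported positive roots to negatives of
`J`-supported positive roots. -/
lemma negJ_inv_image {J : Set ℕ} {w : V ≃ₗᵢ[ℝ] V} (hw : w ∈ S.WJ J)
    (hneg : ∀ j ∈ J ∩ Set.Icc 1 n, S.IsNeg (w (S.a j))) :
    ∀ β, S.PosJ J β → S.PosJ J (-(w⁻¹ β)) := by
  intro β hβ
  have hwinv : w⁻¹ ∈ S.WJ J := inv_mem hw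
  obtain ⟨l, hl, hleq⟩ := S.exists_word hwinv
  have hγR : w⁻¹ β ∈ S.R := by
    rw [hleq]
    exact S.word_maps_R (fun m hm => (hl m hm).2) hβ.1
  obtain ⟨b, hb, hbsupp, hbrep⟩ := hβ.2
  obtain ⟨d, hd0, hd⟩ := S.word_sub_combo hl β
  rw [← hleq] at hd
  rcases S.pos_or_neg hγR with hpos | hneg'
  · exfalso
    obtain ⟨_, c, hc, hcrep⟩ := hpos
    have hγJ : S.PosJ J (w⁻¹ β) := by
      refine S.posJ_of_two_reps hγR hc hcrep (d := fun m => b m + d m)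
        (fun m hm => by rw [hbsupp m hm, hd0 m hm, add_zero]) ?_
      have : w⁻¹ β = β + (w⁻¹ β - β) := by abel
      rw [this, hd, hbrep, ← Finset.sum_add_distrib]
      exact Finset.sum_congr rfl fun m _ => by rw [add_smul]
    have h2 := S.negJ_image hw hneg _ hγJ
    rw [LinearIsometryEquiv.coe_inv, w.apply_symm_apply] at h2
    exact S.pos_neg_false hβ.isPos h2.isPos
  · obtain ⟨hR', e, he, herep⟩ := hneg'
    refine S.posJ_of_two_reps hR' he herep (d := fun m => -(b m) - d m)
      (fun m hm => by rw [hbsupp m hm, hd0 m hm, neg_zero, sub_zero]) ?_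
    have : -(w⁻¹ β) = -β - (w⁻¹ β - β) := by abel
    rw [this, hd, hbrep, ← Finset.sum_neg_distrib, ← Finset.sum_sub_distrib]
    exact Finset.sum_congr rfl fun m _ => by rw [sub_smul, neg_smul]

/-- Two elements of `W_J` sending all simple roots of `J` to negative roots coincide. -/
lemma eq_of_neg_simples {J : Set ℕ} {w w' : V ≃ₗᵢ[ℝ] V} (hw : w ∈ S.WJ J)
    (hw' : w' ∈ S.WJ J) (h1 : ∀ j ∈ J ∩ Set.Icc 1 n, S.IsNeg (w (S.a j)))
    (h2 : ∀ j ∈ J ∩ Set.Icc 1 n, S.IsNeg (w' (S.a j))) : w = w' := by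
  have key : w'⁻¹ * w = 1 := by
    refine S.eq_one_of_pos (mul_mem (inv_mem hw') hw) fun j hj => ?_
    have hn : S.PosJ J (-(w (S.a j))) := S.negJ_image hw h1 _ (S.posJ_simple hj)
    have h3 := S.negJ_inv_image hw' h2 _ hn
    rw [map_neg, neg_neg] at h3
    have h4 : (w'⁻¹ * w) (S.a j) = w'⁻¹ (w (S.a j)) := rfl
    rw [h4]
    exact h3.isPos
  exact (inv_mul_eq_one.1 key).symm

/-- A longest element of `W_J` sends all simple roots of `J` to negative roots. -/
lemma longest_neg_simples {J : Set ℕ} {w₀ : V ≃ₗᵢ[ℝ] V} (hw₀ : S.IsLongest J w₀) :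
    ∀ j ∈ J ∩ Set.Icc 1 n, S.IsNeg (w₀ (S.a j)) := by
  obtain ⟨hmem, hmax⟩ := hw₀
  intro j hj
  have hR : w₀ (S.a j) ∈ S.R := by
    obtain ⟨l, hl, rfl⟩ := S.exists_word hmem
    exact S.word_maps_R (fun m hm => (hl m hm).2)
      (S.simple_mem j (mem_FIcc_of_mem hj))
  rcases S.pos_or_neg hR with hpos | hneg
  · exfalso
    have hlt := S.len_lt_of_pos hmem hj hpos
    have hle := hmax (w₀ * S.s j)
      (mul_mem hmem (Subgroup.subset_closure ⟨j, hj, rfl⟩))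
    omega
  · exact hneg

/-- Identification of a longest element with an explicitly given one. -/
lemma longest_eq {J : Set ℕ} {w₀ wex : V ≃ₗᵢ[ℝ] V} (hw₀ : S.IsLongest J w₀)
    (hmem : wex ∈ S.WJ J) (hneg : ∀ j ∈ J ∩ Set.Icc 1 n, S.IsNeg (wex (S.a j))) :
    w₀ = wex :=
  S.eq_of_neg_simples hw₀.1 hmem (S.longest_neg_simples hw₀) hneg

end RootSystemWithBase

end Aux4

/-- Adjacency in the Dynkin diagram of type `E_n` (`n = 6, 7, 8`, Bourbaki labeling):
`α_2` is the branch node attached to `α_4`; `α_1, α_3, α_4, …, α_n` form a chain. -/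
def adjE (i j : ℕ) : Prop :=
  (i, j) ∈ ([(1,3),(3,4),(2,4),(4,5),(5,6),(6,7),(7,8)] : List (ℕ × ℕ)) ∨
  (j, i) ∈ ([(1,3),(3,4),(2,4),(4,5),(5,6),(6,7),(7,8)] : List (ℕ × ℕ))

/-- The element `v_2 = s_2 s_4 s_5 s_3 s_6 s_4 s_1 s_3 s_5 s_4 s_2` of the Weyl group of `E_6`. -/
def v2E6 (S : RootSystemWithBase V 6) : V ≃ₗᵢ[ℝ] V :=
  S.prodW [2, 4, 5, 3, 6, 4, 1, 3, 5, 4, 2]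


section AuxE6

set_option linter.unusedSectionVars false
set_option maxHeartbeats 1000000

namespace RootSystemWithBase

variable {V : Type*} [NormedAddCommGroup V] [InnerProductSpace ℝ V] [FiniteDimensional ℝ V]

/-- The `E₆` Gram matrix condition. -/
def GramE6 (S : RootSystemWithBase V 6) : Prop :=
  ∀ i ∈ Finset.Icc 1 6, ∀ j ∈ Finset.Icc 1 6,
    ⟪S.a i, S.a j⟫ = if i = j then 2 else if adjE i j then -1 else 0

/-- The vector with coefficients `c1, …, c6` over the simple roots. -/
def v6 (S : RootSystemWithBase V 6) (c1 c2 c3 c4 c5 c6 : ℝ) : V :=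
  c1 • S.a 1 + c2 • S.a 2 + c3 • S.a 3 + c4 • S.a 4 + c5 • S.a 5 + c6 • S.a 6

variable (S : RootSystemWithBase V 6)

lemma inner_a1_v6 (hE : GramE6 S) (c1 c2 c3 c4 c5 c6 : ℝ) :
    ⟪S.a 1, v6 S c1 c2 c3 c4 c5 c6⟫ = 2 * c1 - c3 := by
  have h11 : ⟪S.a 1, S.a 1⟫ = 2 := by
    rw [hE 1 (by decide) 1 (by decide)]
    norm_num [adjE]
  have h12 : ⟪S.a 1, S.a 2⟫ = 0 := by
    rw [hE 1 (by decide) 2 (by decide)]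
    norm_num [adjE]
  have h13 : ⟪S.a 1, S.a 3⟫ = -1 := by
    rw [hE 1 (by decide) 3 (by decide)]
    norm_num [adjE]
  have h14 : ⟪S.a 1, S.a 4⟫ = 0 := by
    rw [hE 1 (by decide) 4 (by decide)]
    norm_num [adjE]
  have h15 : ⟪S.a 1, S.a 5⟫ = 0 := by
    rw [hE 1 (by decide) 5 (by decide)]
    norm_num [adjE]
  have h16 : ⟪S.a 1, S.a 6⟫ = 0 := by
    rw [hE 1 (by decide) 6 (by decide)]
    norm_num [adjE]
  simp only [v6, inner_add_right, real_inner_smul_right, h11, h12, h13, h14, h15, h16]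
  ring

lemma inner_a2_v6 (hE : GramE6 S) (c1 c2 c3 c4 c5 c6 : ℝ) :
    ⟪S.a 2, v6 S c1 c2 c3 c4 c5 c6⟫ = 2 * c2 - c4 := by
  have h21 : ⟪S.a 2, S.a 1⟫ = 0 := by
    rw [hE 2 (by decide) 1 (by decide)]
    norm_num [adjE]
  have h22 : ⟪S.a 2, S.a 2⟫ = 2 := by
    rw [hE 2 (by decide) 2 (by decide)]
    norm_num [adjE]
  have h23 : ⟪S.a 2, S.a 3⟫ = 0 := by
    rw [hE 2 (by decide) 3 (by decide)]
    norm_num [adjE]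
  have h24 : ⟪S.a 2, S.a 4⟫ = -1 := by
    rw [hE 2 (by decide) 4 (by decide)]
    norm_num [adjE]
  have h25 : ⟪S.a 2, S.a 5⟫ = 0 := by
    rw [hE 2 (by decide) 5 (by decide)]
    norm_num [adjE]
  have h26 : ⟪S.a 2, S.a 6⟫ = 0 := by
    rw [hE 2 (by decide) 6 (by decide)]
    norm_num [adjE]
  simp only [v6, inner_add_right, real_inner_smul_right, h21, h22, h23, h24, h25, h26]
  ring

lemma inner_a3_v6 (hE : GramE6 S) (c1 c2 c3 c4 c5 c6 : ℝ) :
    ⟪S.a 3, v6 S c1 c2 c3 c4 c5 c6⟫ = -c1 + 2 * c3 - c4 := by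
  have h31 : ⟪S.a 3, S.a 1⟫ = -1 := by
    rw [hE 3 (by decide) 1 (by decide)]
    norm_num [adjE]
  have h32 : ⟪S.a 3, S.a 2⟫ = 0 := by
    rw [hE 3 (by decide) 2 (by decide)]
    norm_num [adjE]
  have h33 : ⟪S.a 3, S.a 3⟫ = 2 := by
    rw [hE 3 (by decide) 3 (by decide)]
    norm_num [adjE]
  have h34 : ⟪S.a 3, S.a 4⟫ = -1 := by
    rw [hE 3 (by decide) 4 (by decide)]
    norm_num [adjE]
  have h35 : ⟪S.a 3, S.a 5⟫ = 0 := by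
    rw [hE 3 (by decide) 5 (by decide)]
    norm_num [adjE]
  have h36 : ⟪S.a 3, S.a 6⟫ = 0 := by
    rw [hE 3 (by decide) 6 (by decide)]
    norm_num [adjE]
  simp only [v6, inner_add_right, real_inner_smul_right, h31, h32, h33, h34, h35, h36]
  ring

lemma inner_a4_v6 (hE : GramE6 S) (c1 c2 c3 c4 c5 c6 : ℝ) :
    ⟪S.a 4, v6 S c1 c2 c3 c4 c5 c6⟫ = -c2 - c3 + 2 * c4 - c5 := by
  have h41 : ⟪S.a 4, S.a 1⟫ = 0 := by
    rw [hE 4 (by decide) 1 (by decide)]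
    norm_num [adjE]
  have h42 : ⟪S.a 4, S.a 2⟫ = -1 := by
    rw [hE 4 (by decide) 2 (by decide)]
    norm_num [adjE]
  have h43 : ⟪S.a 4, S.a 3⟫ = -1 := by
    rw [hE 4 (by decide) 3 (by decide)]
    norm_num [adjE]
  have h44 : ⟪S.a 4, S.a 4⟫ = 2 := by
    rw [hE 4 (by decide) 4 (by decide)]
    norm_num [adjE]
  have h45 : ⟪S.a 4, S.a 5⟫ = -1 := by
    rw [hE 4 (by decide) 5 (by decide)]
    norm_num [adjE]
  have h46 : ⟪S.a 4, S.a 6⟫ = 0 := by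
    rw [hE 4 (by decide) 6 (by decide)]
    norm_num [adjE]
  simp only [v6, inner_add_right, real_inner_smul_right, h41, h42, h43, h44, h45, h46]
  ring

lemma inner_a5_v6 (hE : GramE6 S) (c1 c2 c3 c4 c5 c6 : ℝ) :
    ⟪S.a 5, v6 S c1 c2 c3 c4 c5 c6⟫ = -c4 + 2 * c5 - c6 := by
  have h51 : ⟪S.a 5, S.a 1⟫ = 0 := by
    rw [hE 5 (by decide) 1 (by decide)]
    norm_num [adjE]
  have h52 : ⟪S.a 5, S.a 2⟫ = 0 := by
    rw [hE 5 (by decide) 2 (by decide)]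
    norm_num [adjE]
  have h53 : ⟪S.a 5, S.a 3⟫ = 0 := by
    rw [hE 5 (by decide) 3 (by decide)]
    norm_num [adjE]
  have h54 : ⟪S.a 5, S.a 4⟫ = -1 := by
    rw [hE 5 (by decide) 4 (by decide)]
    norm_num [adjE]
  have h55 : ⟪S.a 5, S.a 5⟫ = 2 := by
    rw [hE 5 (by decide) 5 (by decide)]
    norm_num [adjE]
  have h56 : ⟪S.a 5, S.a 6⟫ = -1 := by
    rw [hE 5 (by decide) 6 (by decide)]
    norm_num [adjE]
  simp only [v6, inner_add_right, real_inner_smul_right, h51, h52, h53, h54, h55, h56]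
  ring

lemma inner_a6_v6 (hE : GramE6 S) (c1 c2 c3 c4 c5 c6 : ℝ) :
    ⟪S.a 6, v6 S c1 c2 c3 c4 c5 c6⟫ = -c5 + 2 * c6 := by
  have h61 : ⟪S.a 6, S.a 1⟫ = 0 := by
    rw [hE 6 (by decide) 1 (by decide)]
    norm_num [adjE]
  have h62 : ⟪S.a 6, S.a 2⟫ = 0 := by
    rw [hE 6 (by decide) 2 (by decide)]
    norm_num [adjE]
  have h63 : ⟪S.a 6, S.a 3⟫ = 0 := by
    rw [hE 6 (by decide) 3 (by decide)]
    norm_num [adjE]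
  have h64 : ⟪S.a 6, S.a 4⟫ = 0 := by
    rw [hE 6 (by decide) 4 (by decide)]
    norm_num [adjE]
  have h65 : ⟪S.a 6, S.a 5⟫ = -1 := by
    rw [hE 6 (by decide) 5 (by decide)]
    norm_num [adjE]
  have h66 : ⟪S.a 6, S.a 6⟫ = 2 := by
    rw [hE 6 (by decide) 6 (by decide)]
    norm_num [adjE]
  simp only [v6, inner_add_right, real_inner_smul_right, h61, h62, h63, h64, h65, h66]
  ring

lemma s1_v6 (hE : GramE6 S) (c1 c2 c3 c4 c5 c6 : ℝ) :
    S.s 1 (v6 S c1 c2 c3 c4 c5 c6) = v6 S (-c1 + c3) c2 c3 c4 c5 c6 := by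
  have h : S.s 1 (v6 S c1 c2 c3 c4 c5 c6) = v6 S c1 c2 c3 c4 c5 c6 -
      (2 * ⟪S.a 1, v6 S c1 c2 c3 c4 c5 c6⟫ / ⟪S.a 1, S.a 1⟫) • S.a 1 :=
    sref_apply (S.a 1) _
  have hii : ⟪S.a 1, S.a 1⟫ = 2 := by
    rw [hE 1 (by decide) 1 (by decide)]
    norm_num
  rw [h, inner_a1_v6 S hE, hii]
  simp only [v6]
  match_scalars <;> ring

lemma s2_v6 (hE : GramE6 S) (c1 c2 c3 c4 c5 c6 : ℝ) :
    S.s 2 (v6 S c1 c2 c3 c4 c5 c6) = v6 S c1 (-c2 + c4) c3 c4 c5 c6 := by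
  have h : S.s 2 (v6 S c1 c2 c3 c4 c5 c6) = v6 S c1 c2 c3 c4 c5 c6 -
      (2 * ⟪S.a 2, v6 S c1 c2 c3 c4 c5 c6⟫ / ⟪S.a 2, S.a 2⟫) • S.a 2 :=
    sref_apply (S.a 2) _
  have hii : ⟪S.a 2, S.a 2⟫ = 2 := by
    rw [hE 2 (by decide) 2 (by decide)]
    norm_num
  rw [h, inner_a2_v6 S hE, hii]
  simp only [v6]
  match_scalars <;> ring

lemma s3_v6 (hE : GramE6 S) (c1 c2 c3 c4 c5 c6 : ℝ) :
    S.s 3 (v6 S c1 c2 c3 c4 c5 c6) = v6 S c1 c2 (c1 -c3 + c4) c4 c5 c6 := by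
  have h : S.s 3 (v6 S c1 c2 c3 c4 c5 c6) = v6 S c1 c2 c3 c4 c5 c6 -
      (2 * ⟪S.a 3, v6 S c1 c2 c3 c4 c5 c6⟫ / ⟪S.a 3, S.a 3⟫) • S.a 3 :=
    sref_apply (S.a 3) _
  have hii : ⟪S.a 3, S.a 3⟫ = 2 := by
    rw [hE 3 (by decide) 3 (by decide)]
    norm_num
  rw [h, inner_a3_v6 S hE, hii]
  simp only [v6]
  match_scalars <;> ring

lemma s4_v6 (hE : GramE6 S) (c1 c2 c3 c4 c5 c6 : ℝ) :
    S.s 4 (v6 S c1 c2 c3 c4 c5 c6) = v6 S c1 c2 c3 (c2 + c3 -c4 + c5) c5 c6 := by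
  have h : S.s 4 (v6 S c1 c2 c3 c4 c5 c6) = v6 S c1 c2 c3 c4 c5 c6 -
      (2 * ⟪S.a 4, v6 S c1 c2 c3 c4 c5 c6⟫ / ⟪S.a 4, S.a 4⟫) • S.a 4 :=
    sref_apply (S.a 4) _
  have hii : ⟪S.a 4, S.a 4⟫ = 2 := by
    rw [hE 4 (by decide) 4 (by decide)]
    norm_num
  rw [h, inner_a4_v6 S hE, hii]
  simp only [v6]
  match_scalars <;> ring

lemma s5_v6 (hE : GramE6 S) (c1 c2 c3 c4 c5 c6 : ℝ) :
    S.s 5 (v6 S c1 c2 c3 c4 c5 c6) = v6 S c1 c2 c3 c4 (c4 -c5 + c6) c6 := by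
  have h : S.s 5 (v6 S c1 c2 c3 c4 c5 c6) = v6 S c1 c2 c3 c4 c5 c6 -
      (2 * ⟪S.a 5, v6 S c1 c2 c3 c4 c5 c6⟫ / ⟪S.a 5, S.a 5⟫) • S.a 5 :=
    sref_apply (S.a 5) _
  have hii : ⟪S.a 5, S.a 5⟫ = 2 := by
    rw [hE 5 (by decide) 5 (by decide)]
    norm_num
  rw [h, inner_a5_v6 S hE, hii]
  simp only [v6]
  match_scalars <;> ring

lemma s6_v6 (hE : GramE6 S) (c1 c2 c3 c4 c5 c6 : ℝ) :
    S.s 6 (v6 S c1 c2 c3 c4 c5 c6) = v6 S c1 c2 c3 c4 c5 (c5 -c6) := by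
  have h : S.s 6 (v6 S c1 c2 c3 c4 c5 c6) = v6 S c1 c2 c3 c4 c5 c6 -
      (2 * ⟪S.a 6, v6 S c1 c2 c3 c4 c5 c6⟫ / ⟪S.a 6, S.a 6⟫) • S.a 6 :=
    sref_apply (S.a 6) _
  have hii : ⟪S.a 6, S.a 6⟫ = 2 := by
    rw [hE 6 (by decide) 6 (by decide)]
    norm_num
  rw [h, inner_a6_v6 S hE, hii]
  simp only [v6]
  match_scalars <;> ring

lemma isNeg_neg_simple {k : ℕ} (hk : k ∈ Finset.Icc 1 6) : S.IsNeg (-(S.a k)) := by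
  show S.IsPos (- -(S.a k))
  rw [neg_neg]
  exact S.isPos_simple hk

lemma omega_eq (hE : GramE6 S) {ω : V} (hω : S.IsFundamental 2 ω) : ω = v6 S 1 2 2 3 2 1 := by
  have horth : ∀ j ∈ Finset.Icc 1 6, ⟪ω - v6 S 1 2 2 3 2 1, S.a j⟫ = 0 := by
    intro j hj
    have hjj : ⟪S.a j, S.a j⟫ = 2 := by
      rw [hE j hj j hj]
      norm_num
    have hfund := hω j hj
    rw [hjj] at hfund
    have hωj : ⟪ω, S.a j⟫ = if j = 2 then 1 else 0 := by
      rcases eq_or_ne j 2 with rfl | hne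
      · rw [if_pos rfl] at hfund ⊢
        linarith
      · rw [if_neg hne] at hfund ⊢
        linarith
    rw [inner_sub_left, hωj]
    have hcomm : ⟪v6 S 1 2 2 3 2 1, S.a j⟫ = ⟪S.a j, v6 S 1 2 2 3 2 1⟫ :=
      real_inner_comm _ _
    fin_cases hj <;>
      simp only [hcomm, inner_a1_v6 S hE, inner_a2_v6 S hE, inner_a3_v6 S hE,
        inner_a4_v6 S hE, inner_a5_v6 S hE, inner_a6_v6 S hE] <;> norm_num
  set x := ω - v6 S 1 2 2 3 2 1 with hx
  have hspan : ∀ y ∈ Submodule.span ℝ (S.a '' Set.Icc 1 6), ⟪x, y⟫ = 0 := by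
    intro y hy
    induction hy using Submodule.span_induction with
    | mem y hy =>
        obtain ⟨j, hj, rfl⟩ := hy
        refine horth j ?_
        simpa [Finset.mem_Icc, Set.mem_Icc] using hj
    | zero => simp
    | add y z hy hz ihy ihz => rw [inner_add_right, ihy, ihz, add_zero]
    | smul t y hy ihy => rw [real_inner_smul_right, ihy, mul_zero]
  have hxx : ⟪x, x⟫ = 0 := hspan x (by rw [S.span_top]; trivial)
  have : x = 0 := by
    rwa [inner_self_eq_zero] at hxx
  have := sub_eq_zero.1 this
  exact this

end RootSystemWithBase

end AuxE6

/-- In type `E_6`, with `v_2` as above: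
(1) `w_{0, S∖{α_2, α_3}}(α_2) = α_2 + α_4 + α_5 + α_6`,
`w_{0, S∖{α_2}} w_{0, S∖{α_2, α_3}}(α_2) = ω_2 - (α_1 + α_2 + α_3 + α_4)`, and
`v_2 w_{0, S∖{α_2}} w_{0, S∖{α_2, α_3}}(α_2) = α_1 + α_3 + α_4`;
(2) `w_{0, S∖{α_2, α_4}}(α_2) = α_2`, `w_{0, S∖{α_2}} w_{0, S∖{α_2, α_4}}(α_2) = ω_2 - α_2`,
and `v_2 w_{0, S∖{α_2}} w_{0, S∖{α_2, α_4}}(α_2) = ω_2 - α_2`;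
(3) `w_{0, S∖{α_2, α_5}}(α_2) = α_1 + α_2 + α_3 + α_4`,
`w_{0, S∖{α_2}} w_{0, S∖{α_2, α_5}}(α_2) = ω_2 - (α_2 + α_4 + α_5 + α_6)`, and
`v_2 w_{0, S∖{α_2}} w_{0, S∖{α_2, α_5}}(α_2) = α_4 + α_5 + α_6`;
(4) `w_{0, S∖{α_2, α_i}}(α_i) = α_1 + α_3 + α_4 + α_5 + α_6` for `i ∈ {3, 4, 5}`. -/
theorem statement12 (S : RootSystemWithBase V 6)
    (hE : ∀ i ∈ Finset.Icc 1 6, ∀ j ∈ Finset.Icc 1 6,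
      ⟪S.a i, S.a j⟫ = if i = j then 2 else if adjE i j then -1 else 0)
    (ω : V) (hω : S.IsFundamental 2 ω)
    (w0a : V ≃ₗᵢ[ℝ] V) (hw0a : S.IsLongest (Set.Icc 1 6 \ {2}) w0a) :
    (∀ w0b : V ≃ₗᵢ[ℝ] V, S.IsLongest (Set.Icc 1 6 \ {2, 3}) w0b →
      w0b (S.a 2) = S.a 2 + S.a 4 + S.a 5 + S.a 6 ∧
      w0a (w0b (S.a 2)) = ω - (S.a 1 + S.a 2 + S.a 3 + S.a 4) ∧
      v2E6 S (w0a (w0b (S.a 2))) = S.a 1 + S.a 3 + S.a 4) ∧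
    (∀ w0b : V ≃ₗᵢ[ℝ] V, S.IsLongest (Set.Icc 1 6 \ {2, 4}) w0b →
      w0b (S.a 2) = S.a 2 ∧
      w0a (w0b (S.a 2)) = ω - S.a 2 ∧
      v2E6 S (w0a (w0b (S.a 2))) = ω - S.a 2) ∧
    (∀ w0b : V ≃ₗᵢ[ℝ] V, S.IsLongest (Set.Icc 1 6 \ {2, 5}) w0b →
      w0b (S.a 2) = S.a 1 + S.a 2 + S.a 3 + S.a 4 ∧
      w0a (w0b (S.a 2)) = ω - (S.a 2 + S.a 4 + S.a 5 + S.a 6) ∧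
      v2E6 S (w0a (w0b (S.a 2))) = S.a 4 + S.a 5 + S.a 6) ∧
    (∀ i ∈ ({3, 4, 5} : Set ℕ), ∀ w0b : V ≃ₗᵢ[ℝ] V,
      S.IsLongest (Set.Icc 1 6 \ {2, i}) w0b →
      w0b (S.a i) = S.a 1 + S.a 3 + S.a 4 + S.a 5 + S.a 6) := by
  classical
  have hE' : S.GramE6 := hE
  have hωv : ω = S.v6 1 2 2 3 2 1 := S.omega_eq hE' hω
  have cA1 : S.prodW [1, 3, 1, 4, 3, 1, 5, 4, 3, 1, 6, 5, 4, 3, 1] (S.v6 1 0 0 0 0 0) = S.v6 0 0 0 0 0 (-1) := by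
    norm_num [S.prodW_cons_apply, S.prodW_nil_apply, S.s1_v6 hE', S.s2_v6 hE', S.s3_v6 hE', S.s4_v6 hE', S.s5_v6 hE', S.s6_v6 hE']
  have cA3 : S.prodW [1, 3, 1, 4, 3, 1, 5, 4, 3, 1, 6, 5, 4, 3, 1] (S.v6 0 0 1 0 0 0) = S.v6 0 0 0 0 (-1) 0 := by
    norm_num [S.prodW_cons_apply, S.prodW_nil_apply, S.s1_v6 hE', S.s2_v6 hE', S.s3_v6 hE', S.s4_v6 hE', S.s5_v6 hE', S.s6_v6 hE']
  have cA4 : S.prodW [1, 3, 1, 4, 3, 1, 5, 4, 3, 1, 6, 5, 4, 3, 1] (S.v6 0 0 0 1 0 0) = S.v6 0 0 0 (-1) 0 0 := by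
    norm_num [S.prodW_cons_apply, S.prodW_nil_apply, S.s1_v6 hE', S.s2_v6 hE', S.s3_v6 hE', S.s4_v6 hE', S.s5_v6 hE', S.s6_v6 hE']
  have cA5 : S.prodW [1, 3, 1, 4, 3, 1, 5, 4, 3, 1, 6, 5, 4, 3, 1] (S.v6 0 0 0 0 1 0) = S.v6 0 0 (-1) 0 0 0 := by
    norm_num [S.prodW_cons_apply, S.prodW_nil_apply, S.s1_v6 hE', S.s2_v6 hE', S.s3_v6 hE', S.s4_v6 hE', S.s5_v6 hE', S.s6_v6 hE']
  have cA6 : S.prodW [1, 3, 1, 4, 3, 1, 5, 4, 3, 1, 6, 5, 4, 3, 1] (S.v6 0 0 0 0 0 1) = S.v6 (-1) 0 0 0 0 0 := by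
    norm_num [S.prodW_cons_apply, S.prodW_nil_apply, S.s1_v6 hE', S.s2_v6 hE', S.s3_v6 hE', S.s4_v6 hE', S.s5_v6 hE', S.s6_v6 hE']
  have cAx1 : S.prodW [1, 3, 1, 4, 3, 1, 5, 4, 3, 1, 6, 5, 4, 3, 1] (S.v6 0 1 0 1 1 1) = S.v6 0 1 1 2 2 1 := by
    norm_num [S.prodW_cons_apply, S.prodW_nil_apply, S.s1_v6 hE', S.s2_v6 hE', S.s3_v6 hE', S.s4_v6 hE', S.s5_v6 hE', S.s6_v6 hE']
  have cAx2 : S.prodW [1, 3, 1, 4, 3, 1, 5, 4, 3, 1, 6, 5, 4, 3, 1] (S.v6 0 1 0 0 0 0) = S.v6 1 1 2 3 2 1 := by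
    norm_num [S.prodW_cons_apply, S.prodW_nil_apply, S.s1_v6 hE', S.s2_v6 hE', S.s3_v6 hE', S.s4_v6 hE', S.s5_v6 hE', S.s6_v6 hE']
  have cAx3 : S.prodW [1, 3, 1, 4, 3, 1, 5, 4, 3, 1, 6, 5, 4, 3, 1] (S.v6 1 1 1 1 0 0) = S.v6 1 1 2 2 1 0 := by
    norm_num [S.prodW_cons_apply, S.prodW_nil_apply, S.s1_v6 hE', S.s2_v6 hE', S.s3_v6 hE', S.s4_v6 hE', S.s5_v6 hE', S.s6_v6 hE']
  have cB3s1 : S.prodW [1, 4, 5, 4, 6, 5, 4] (S.v6 1 0 0 0 0 0) = S.v6 (-1) 0 0 0 0 0 := by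
    norm_num [S.prodW_cons_apply, S.prodW_nil_apply, S.s1_v6 hE', S.s2_v6 hE', S.s3_v6 hE', S.s4_v6 hE', S.s5_v6 hE', S.s6_v6 hE']
  have cB3s4 : S.prodW [1, 4, 5, 4, 6, 5, 4] (S.v6 0 0 0 1 0 0) = S.v6 0 0 0 0 0 (-1) := by
    norm_num [S.prodW_cons_apply, S.prodW_nil_apply, S.s1_v6 hE', S.s2_v6 hE', S.s3_v6 hE', S.s4_v6 hE', S.s5_v6 hE', S.s6_v6 hE']
  have cB3s5 : S.prodW [1, 4, 5, 4, 6, 5, 4] (S.v6 0 0 0 0 1 0) = S.v6 0 0 0 0 (-1) 0 := by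
    norm_num [S.prodW_cons_apply, S.prodW_nil_apply, S.s1_v6 hE', S.s2_v6 hE', S.s3_v6 hE', S.s4_v6 hE', S.s5_v6 hE', S.s6_v6 hE']
  have cB3s6 : S.prodW [1, 4, 5, 4, 6, 5, 4] (S.v6 0 0 0 0 0 1) = S.v6 0 0 0 (-1) 0 0 := by
    norm_num [S.prodW_cons_apply, S.prodW_nil_apply, S.s1_v6 hE', S.s2_v6 hE', S.s3_v6 hE', S.s4_v6 hE', S.s5_v6 hE', S.s6_v6 hE']
  have cB3a2 : S.prodW [1, 4, 5, 4, 6, 5, 4] (S.v6 0 1 0 0 0 0) = S.v6 0 1 0 1 1 1 := by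
    norm_num [S.prodW_cons_apply, S.prodW_nil_apply, S.s1_v6 hE', S.s2_v6 hE', S.s3_v6 hE', S.s4_v6 hE', S.s5_v6 hE', S.s6_v6 hE']
  have cB3ai : S.prodW [1, 4, 5, 4, 6, 5, 4] (S.v6 0 0 1 0 0 0) = S.v6 1 0 1 1 1 1 := by
    norm_num [S.prodW_cons_apply, S.prodW_nil_apply, S.s1_v6 hE', S.s2_v6 hE', S.s3_v6 hE', S.s4_v6 hE', S.s5_v6 hE', S.s6_v6 hE']
  have cB4s1 : S.prodW [1, 3, 1, 5, 6, 5] (S.v6 1 0 0 0 0 0) = S.v6 0 0 (-1) 0 0 0 := by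
    norm_num [S.prodW_cons_apply, S.prodW_nil_apply, S.s1_v6 hE', S.s2_v6 hE', S.s3_v6 hE', S.s4_v6 hE', S.s5_v6 hE', S.s6_v6 hE']
  have cB4s3 : S.prodW [1, 3, 1, 5, 6, 5] (S.v6 0 0 1 0 0 0) = S.v6 (-1) 0 0 0 0 0 := by
    norm_num [S.prodW_cons_apply, S.prodW_nil_apply, S.s1_v6 hE', S.s2_v6 hE', S.s3_v6 hE', S.s4_v6 hE', S.s5_v6 hE', S.s6_v6 hE']
  have cB4s5 : S.prodW [1, 3, 1, 5, 6, 5] (S.v6 0 0 0 0 1 0) = S.v6 0 0 0 0 0 (-1) := by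
    norm_num [S.prodW_cons_apply, S.prodW_nil_apply, S.s1_v6 hE', S.s2_v6 hE', S.s3_v6 hE', S.s4_v6 hE', S.s5_v6 hE', S.s6_v6 hE']
  have cB4s6 : S.prodW [1, 3, 1, 5, 6, 5] (S.v6 0 0 0 0 0 1) = S.v6 0 0 0 0 (-1) 0 := by
    norm_num [S.prodW_cons_apply, S.prodW_nil_apply, S.s1_v6 hE', S.s2_v6 hE', S.s3_v6 hE', S.s4_v6 hE', S.s5_v6 hE', S.s6_v6 hE']
  have cB4a2 : S.prodW [1, 3, 1, 5, 6, 5] (S.v6 0 1 0 0 0 0) = S.v6 0 1 0 0 0 0 := by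
    norm_num [S.prodW_cons_apply, S.prodW_nil_apply, S.s1_v6 hE', S.s2_v6 hE', S.s3_v6 hE', S.s4_v6 hE', S.s5_v6 hE', S.s6_v6 hE']
  have cB4ai : S.prodW [1, 3, 1, 5, 6, 5] (S.v6 0 0 0 1 0 0) = S.v6 1 0 1 1 1 1 := by
    norm_num [S.prodW_cons_apply, S.prodW_nil_apply, S.s1_v6 hE', S.s2_v6 hE', S.s3_v6 hE', S.s4_v6 hE', S.s5_v6 hE', S.s6_v6 hE']
  have cB5s1 : S.prodW [1, 3, 1, 4, 3, 1, 6] (S.v6 1 0 0 0 0 0) = S.v6 0 0 0 (-1) 0 0 := by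
    norm_num [S.prodW_cons_apply, S.prodW_nil_apply, S.s1_v6 hE', S.s2_v6 hE', S.s3_v6 hE', S.s4_v6 hE', S.s5_v6 hE', S.s6_v6 hE']
  have cB5s3 : S.prodW [1, 3, 1, 4, 3, 1, 6] (S.v6 0 0 1 0 0 0) = S.v6 0 0 (-1) 0 0 0 := by
    norm_num [S.prodW_cons_apply, S.prodW_nil_apply, S.s1_v6 hE', S.s2_v6 hE', S.s3_v6 hE', S.s4_v6 hE', S.s5_v6 hE', S.s6_v6 hE']
  have cB5s4 : S.prodW [1, 3, 1, 4, 3, 1, 6] (S.v6 0 0 0 1 0 0) = S.v6 (-1) 0 0 0 0 0 := by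
    norm_num [S.prodW_cons_apply, S.prodW_nil_apply, S.s1_v6 hE', S.s2_v6 hE', S.s3_v6 hE', S.s4_v6 hE', S.s5_v6 hE', S.s6_v6 hE']
  have cB5s6 : S.prodW [1, 3, 1, 4, 3, 1, 6] (S.v6 0 0 0 0 0 1) = S.v6 0 0 0 0 0 (-1) := by
    norm_num [S.prodW_cons_apply, S.prodW_nil_apply, S.s1_v6 hE', S.s2_v6 hE', S.s3_v6 hE', S.s4_v6 hE', S.s5_v6 hE', S.s6_v6 hE']
  have cB5a2 : S.prodW [1, 3, 1, 4, 3, 1, 6] (S.v6 0 1 0 0 0 0) = S.v6 1 1 1 1 0 0 := by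
    norm_num [S.prodW_cons_apply, S.prodW_nil_apply, S.s1_v6 hE', S.s2_v6 hE', S.s3_v6 hE', S.s4_v6 hE', S.s5_v6 hE', S.s6_v6 hE']
  have cB5ai : S.prodW [1, 3, 1, 4, 3, 1, 6] (S.v6 0 0 0 0 1 0) = S.v6 1 0 1 1 1 1 := by
    norm_num [S.prodW_cons_apply, S.prodW_nil_apply, S.s1_v6 hE', S.s2_v6 hE', S.s3_v6 hE', S.s4_v6 hE', S.s5_v6 hE', S.s6_v6 hE']
  have cV1 : S.prodW [2, 4, 5, 3, 6, 4, 1, 3, 5, 4, 2] (S.v6 0 1 1 2 2 1) = S.v6 1 0 1 1 0 0 := by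
    norm_num [S.prodW_cons_apply, S.prodW_nil_apply, S.s1_v6 hE', S.s2_v6 hE', S.s3_v6 hE', S.s4_v6 hE', S.s5_v6 hE', S.s6_v6 hE']
  have cV2 : S.prodW [2, 4, 5, 3, 6, 4, 1, 3, 5, 4, 2] (S.v6 1 1 2 3 2 1) = S.v6 1 1 2 3 2 1 := by
    norm_num [S.prodW_cons_apply, S.prodW_nil_apply, S.s1_v6 hE', S.s2_v6 hE', S.s3_v6 hE', S.s4_v6 hE', S.s5_v6 hE', S.s6_v6 hE']
  have cV3 : S.prodW [2, 4, 5, 3, 6, 4, 1, 3, 5, 4, 2] (S.v6 1 1 2 2 1 0) = S.v6 0 0 0 1 1 1 := by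
    norm_num [S.prodW_cons_apply, S.prodW_nil_apply, S.s1_v6 hE', S.s2_v6 hE', S.s3_v6 hE', S.s4_v6 hE', S.s5_v6 hE', S.s6_v6 hE']
  have ha1 : S.a 1 = S.v6 1 0 0 0 0 0 := by
    simp [RootSystemWithBase.v6]
  have ha2 : S.a 2 = S.v6 0 1 0 0 0 0 := by
    simp [RootSystemWithBase.v6]
  have ha3 : S.a 3 = S.v6 0 0 1 0 0 0 := by
    simp [RootSystemWithBase.v6]
  have ha4 : S.a 4 = S.v6 0 0 0 1 0 0 := by
    simp [RootSystemWithBase.v6]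
  have ha5 : S.a 5 = S.v6 0 0 0 0 1 0 := by
    simp [RootSystemWithBase.v6]
  have ha6 : S.a 6 = S.v6 0 0 0 0 0 1 := by
    simp [RootSystemWithBase.v6]
  have memA : S.prodW [1, 3, 1, 4, 3, 1, 5, 4, 3, 1, 6, 5, 4, 3, 1] ∈ S.WJ (Set.Icc 1 6 \ {2}) := by
    refine S.prodW_mem ?_
    intro i hi
    fin_cases hi <;> norm_num [Set.mem_Icc]
  have negA : ∀ j ∈ (Set.Icc 1 6 \ {2}) ∩ Set.Icc 1 6,
      S.IsNeg (S.prodW [1, 3, 1, 4, 3, 1, 5, 4, 3, 1, 6, 5, 4, 3, 1] (S.a j)) := by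
    intro j hj
    simp only [Set.mem_inter_iff, Set.mem_diff, Set.mem_Icc, Set.mem_singleton_iff,
      Set.mem_insert_iff, not_or] at hj
    have hj' : j = 1 ∨ j = 3 ∨ j = 4 ∨ j = 5 ∨ j = 6 := by omega
    rcases hj' with rfl | rfl | rfl | rfl | rfl
    · rw [ha1, cA1]
      rw [show S.v6 0 0 0 0 0 (-1) = -(S.a 6) from by simp [RootSystemWithBase.v6]]
      exact S.isNeg_neg_simple (by decide)
    · rw [ha3, cA3]
      rw [show S.v6 0 0 0 0 (-1) 0 = -(S.a 5) from by simp [RootSystemWithBase.v6]]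
      exact S.isNeg_neg_simple (by decide)
    · rw [ha4, cA4]
      rw [show S.v6 0 0 0 (-1) 0 0 = -(S.a 4) from by simp [RootSystemWithBase.v6]]
      exact S.isNeg_neg_simple (by decide)
    · rw [ha5, cA5]
      rw [show S.v6 0 0 (-1) 0 0 0 = -(S.a 3) from by simp [RootSystemWithBase.v6]]
      exact S.isNeg_neg_simple (by decide)
    · rw [ha6, cA6]
      rw [show S.v6 (-1) 0 0 0 0 0 = -(S.a 1) from by simp [RootSystemWithBase.v6]]
      exact S.isNeg_neg_simple (by decide)
  have hwa : w0a = S.prodW [1, 3, 1, 4, 3, 1, 5, 4, 3, 1, 6, 5, 4, 3, 1] := S.longest_eq hw0a memA negA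
  have memB3 : S.prodW [1, 4, 5, 4, 6, 5, 4] ∈ S.WJ (Set.Icc 1 6 \ {2, 3}) := by
    refine S.prodW_mem ?_
    intro i hi
    fin_cases hi <;> norm_num [Set.mem_Icc]
  have negB3 : ∀ j ∈ (Set.Icc 1 6 \ {2, 3}) ∩ Set.Icc 1 6,
      S.IsNeg (S.prodW [1, 4, 5, 4, 6, 5, 4] (S.a j)) := by
    intro j hj
    simp only [Set.mem_inter_iff, Set.mem_diff, Set.mem_Icc, Set.mem_singleton_iff,
      Set.mem_insert_iff, not_or] at hj
    have hj' : j = 1 ∨ j = 4 ∨ j = 5 ∨ j = 6 := by omega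
    rcases hj' with rfl | rfl | rfl | rfl
    · rw [ha1, cB3s1]
      rw [show S.v6 (-1) 0 0 0 0 0 = -(S.a 1) from by simp [RootSystemWithBase.v6]]
      exact S.isNeg_neg_simple (by decide)
    · rw [ha4, cB3s4]
      rw [show S.v6 0 0 0 0 0 (-1) = -(S.a 6) from by simp [RootSystemWithBase.v6]]
      exact S.isNeg_neg_simple (by decide)
    · rw [ha5, cB3s5]
      rw [show S.v6 0 0 0 0 (-1) 0 = -(S.a 5) from by simp [RootSystemWithBase.v6]]
      exact S.isNeg_neg_simple (by decide)
    · rw [ha6, cB3s6]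
      rw [show S.v6 0 0 0 (-1) 0 0 = -(S.a 4) from by simp [RootSystemWithBase.v6]]
      exact S.isNeg_neg_simple (by decide)
  have keyB3 : ∀ w0b : V ≃ₗᵢ[ℝ] V, S.IsLongest (Set.Icc 1 6 \ {2, 3}) w0b →
      w0b = S.prodW [1, 4, 5, 4, 6, 5, 4] :=
    fun w0b hb => S.longest_eq hb memB3 negB3
  have memB4 : S.prodW [1, 3, 1, 5, 6, 5] ∈ S.WJ (Set.Icc 1 6 \ {2, 4}) := by
    refine S.prodW_mem ?_
    intro i hi
    fin_cases hi <;> norm_num [Set.mem_Icc]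
  have negB4 : ∀ j ∈ (Set.Icc 1 6 \ {2, 4}) ∩ Set.Icc 1 6,
      S.IsNeg (S.prodW [1, 3, 1, 5, 6, 5] (S.a j)) := by
    intro j hj
    simp only [Set.mem_inter_iff, Set.mem_diff, Set.mem_Icc, Set.mem_singleton_iff,
      Set.mem_insert_iff, not_or] at hj
    have hj' : j = 1 ∨ j = 3 ∨ j = 5 ∨ j = 6 := by omega
    rcases hj' with rfl | rfl | rfl | rfl
    · rw [ha1, cB4s1]
      rw [show S.v6 0 0 (-1) 0 0 0 = -(S.a 3) from by simp [RootSystemWithBase.v6]]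
      exact S.isNeg_neg_simple (by decide)
    · rw [ha3, cB4s3]
      rw [show S.v6 (-1) 0 0 0 0 0 = -(S.a 1) from by simp [RootSystemWithBase.v6]]
      exact S.isNeg_neg_simple (by decide)
    · rw [ha5, cB4s5]
      rw [show S.v6 0 0 0 0 0 (-1) = -(S.a 6) from by simp [RootSystemWithBase.v6]]
      exact S.isNeg_neg_simple (by decide)
    · rw [ha6, cB4s6]
      rw [show S.v6 0 0 0 0 (-1) 0 = -(S.a 5) from by simp [RootSystemWithBase.v6]]
      exact S.isNeg_neg_simple (by decide)
  have keyB4 : ∀ w0b : V ≃ₗᵢ[ℝ] V, S.IsLongest (Set.Icc 1 6 \ {2, 4}) w0b →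
      w0b = S.prodW [1, 3, 1, 5, 6, 5] :=
    fun w0b hb => S.longest_eq hb memB4 negB4
  have memB5 : S.prodW [1, 3, 1, 4, 3, 1, 6] ∈ S.WJ (Set.Icc 1 6 \ {2, 5}) := by
    refine S.prodW_mem ?_
    intro i hi
    fin_cases hi <;> norm_num [Set.mem_Icc]
  have negB5 : ∀ j ∈ (Set.Icc 1 6 \ {2, 5}) ∩ Set.Icc 1 6,
      S.IsNeg (S.prodW [1, 3, 1, 4, 3, 1, 6] (S.a j)) := by
    intro j hj
    simp only [Set.mem_inter_iff, Set.mem_diff, Set.mem_Icc, Set.mem_singleton_iff,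
      Set.mem_insert_iff, not_or] at hj
    have hj' : j = 1 ∨ j = 3 ∨ j = 4 ∨ j = 6 := by omega
    rcases hj' with rfl | rfl | rfl | rfl
    · rw [ha1, cB5s1]
      rw [show S.v6 0 0 0 (-1) 0 0 = -(S.a 4) from by simp [RootSystemWithBase.v6]]
      exact S.isNeg_neg_simple (by decide)
    · rw [ha3, cB5s3]
      rw [show S.v6 0 0 (-1) 0 0 0 = -(S.a 3) from by simp [RootSystemWithBase.v6]]
      exact S.isNeg_neg_simple (by decide)
    · rw [ha4, cB5s4]
      rw [show S.v6 (-1) 0 0 0 0 0 = -(S.a 1) from by simp [RootSystemWithBase.v6]]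
      exact S.isNeg_neg_simple (by decide)
    · rw [ha6, cB5s6]
      rw [show S.v6 0 0 0 0 0 (-1) = -(S.a 6) from by simp [RootSystemWithBase.v6]]
      exact S.isNeg_neg_simple (by decide)
  have keyB5 : ∀ w0b : V ≃ₗᵢ[ℝ] V, S.IsLongest (Set.Icc 1 6 \ {2, 5}) w0b →
      w0b = S.prodW [1, 3, 1, 4, 3, 1, 6] :=
    fun w0b hb => S.longest_eq hb memB5 negB5
  refine ⟨?_, ?_, ?_, ?_⟩
  · intro w0b hb
    rw [keyB3 w0b hb, hwa]
    refine ⟨?_, ?_, ?_⟩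
    · rw [ha2, cB3a2]
      simp only [RootSystemWithBase.v6]
      match_scalars <;> ring
    · rw [ha2, cB3a2, cAx1]
      rw [hωv]
      simp only [RootSystemWithBase.v6]
      match_scalars <;> ring
    · rw [ha2, cB3a2, cAx1]
      unfold v2E6
      rw [cV1]
      simp only [RootSystemWithBase.v6]
      match_scalars <;> ring
  · intro w0b hb
    rw [keyB4 w0b hb, hwa]
    refine ⟨?_, ?_, ?_⟩
    · rw [ha2, cB4a2]
    · rw [ha2, cB4a2, cAx2]
      rw [hωv]
      simp only [RootSystemWithBase.v6]
      match_scalars <;> ring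
    · rw [ha2, cB4a2, cAx2]
      unfold v2E6
      rw [cV2]
      rw [hωv]
      simp only [RootSystemWithBase.v6]
      match_scalars <;> ring
  · intro w0b hb
    rw [keyB5 w0b hb, hwa]
    refine ⟨?_, ?_, ?_⟩
    · rw [ha2, cB5a2]
      simp only [RootSystemWithBase.v6]
      match_scalars <;> ring
    · rw [ha2, cB5a2, cAx3]
      rw [hωv]
      simp only [RootSystemWithBase.v6]
      match_scalars <;> ring
    · rw [ha2, cB5a2, cAx3]
      unfold v2E6
      rw [cV3]
      simp only [RootSystemWithBase.v6]
      match_scalars <;> ring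
  · intro i hi w0b hb
    simp only [Set.mem_insert_iff, Set.mem_singleton_iff] at hi
    rcases hi with rfl | rfl | rfl
    · rw [keyB3 w0b hb, ha3, cB3ai]
      simp only [RootSystemWithBase.v6]
      match_scalars <;> ring
    · rw [keyB4 w0b hb, ha4, cB4ai]
      simp only [RootSystemWithBase.v6]
      match_scalars <;> ring
    · rw [keyB5 w0b hb, ha5, cB5ai]
      simp only [RootSystemWithBase.v6]
      match_scalars <;> ring

end PaperFormal
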